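/- arXiv:2505.24381 — 10 statements merged into one kernel-verified Lean document; each statement's English description precedes it below -/
import Mathlib

section
/- The complete bipartite graph K_{m,m+1} is stable: every complex root x of (1+x)^{m+1} + (1+x)^m - 1 satisfies Re(x) ≤ 0, for every m ≥ 1. -/
/-! If `Re x > 0` then `‖1 + x‖ > 1` and `‖2 + x‖ > 1`, so the factorisation
`(1 + x) ^ (m + 1) + (1 + x) ^ m = (1 + x) ^ m * (2 + x)` has norm greater than `1` and cannot equal `1`. -/

theorem Complex.one_lt_norm_add_of_one_le_of_re_pos {a : ℝ} (ha : 1 ≤ a) {x : ℂ}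
    (hx : 0 < x.re) : 1 < ‖(a : ℂ) + x‖ :=
  calc (1 : ℝ) < ((a : ℂ) + x).re := by simp only [Complex.add_re, Complex.ofReal_re]; linarith
    _ ≤ ‖(a : ℂ) + x‖ := Complex.re_le_norm _

theorem Complex.one_lt_norm_pow_succ_add_pow_of_re_pos (m : ℕ) {x : ℂ} (hx : 0 < x.re) :
    1 < ‖(1 + x) ^ (m + 1) + (1 + x) ^ m‖ := by
  have h1 : 1 < ‖1 + x‖ := by
    simpa using Complex.one_lt_norm_add_of_one_le_of_re_pos le_rfl hx
  have h2 : 1 < ‖2 + x‖ := by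
    simpa using Complex.one_lt_norm_add_of_one_le_of_re_pos one_le_two hx
  have hfactor : (1 + x) ^ (m + 1) + (1 + x) ^ m = (1 + x) ^ m * (2 + x) := by ring
  rw [hfactor, norm_mul, norm_pow]
  exact one_lt_mul_of_le_of_lt (one_le_pow₀ h1.le) h2

theorem Kmmsucc_stable_general (m : ℕ) (x : ℂ)
    (hx : (1 + x) ^ (m + 1) + (1 + x) ^ m - 1 = 0) : x.re ≤ 0 := by
  by_contra! hre
  have hone : (1 + x) ^ (m + 1) + (1 + x) ^ m = 1 := sub_eq_zero.mp hx
  simpa [hone] using Complex.one_lt_norm_pow_succ_add_pow_of_re_pos m hre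

theorem Kmmsucc_stable (m : ℕ) (hm : 1 ≤ m) (x : ℂ)
    (hx : (1 + x) ^ (m + 1) + (1 + x) ^ m - 1 = 0) : x.re ≤ 0 :=
  Kmmsucc_stable_general m x hx
end

section
/- For every n ≥ 4, every complex root z of z^n + z^2 - 1 satisfies Re(z) < 1. -/
theorem roots_Phi_K2n (n : ℕ) (hn : 4 ≤ n) (z : ℂ)
    (hz : z ^ n + z ^ 2 - 1 = 0) : z.re < 1 := by
  by_contra h
  push_neg at h
  have hz' : z ^ n = 1 - z ^ 2 := by linear_combination hz
  have hns : Complex.normSq z ^ n = Complex.normSq (1 - z ^ 2) := by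
    rw [← map_pow, hz']
  set a := z.re with ha
  set t := z.im with ht
  have hu : Complex.normSq z = a ^ 2 + t ^ 2 := by
    simp [Complex.normSq_apply]; ring
  have hrhs : Complex.normSq (1 - z ^ 2) = (1 - (a ^ 2 - t ^ 2)) ^ 2 + (2 * a * t) ^ 2 := by
    simp [Complex.normSq_apply, pow_two, Complex.sub_re, Complex.sub_im, Complex.mul_re,
      Complex.mul_im]
    ring
  rw [hu, hrhs] at hns
  have hu1 : (1 : ℝ) ≤ a ^ 2 + t ^ 2 := by nlinarith [sq_nonneg t]
  have hpow : (a ^ 2 + t ^ 2) ^ 4 ≤ (a ^ 2 + t ^ 2) ^ n := pow_le_pow_right₀ hu1 hn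
  rw [hns] at hpow
  nlinarith [sq_nonneg ((a ^ 2 + t ^ 2) ^ 2 - 1), sq_nonneg (a ^ 2 + t ^ 2 - 1), sq_nonneg t,
    sq_nonneg a, h]
end

section
/- The complete bipartite graph K_{2,n} is stable for all n ≥ 2: every complex root x of (1+x)^n + (1+x)^2 - 1 has Re(x) ≤ 0. -/
theorem K2n_stable (n : ℕ) (hn : 2 ≤ n) (x : ℂ)
    (hx : (1 + x) ^ n + (1 + x) ^ 2 - 1 = 0) : x.re ≤ 0 := by
  by_contra h
  push_neg at h
  set c : ℝ := 1 + x.re with hc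
  set b : ℝ := x.im with hb
  have hc1 : 1 < c := by rw [hc]; linarith
  have hw : (1 + x) ^ n = 1 - (1 + x) ^ 2 := by linear_combination hx
  have habs : Complex.normSq (1 + x) ^ n = Complex.normSq (1 - (1 + x) ^ 2) := by
    rw [← map_pow, hw]
  have hre : (1 + x).re = c := by simp [hc]
  have him : (1 + x).im = b := by simp [hb]
  have hn1 : Complex.normSq (1 + x) = c ^ 2 + b ^ 2 := by
    rw [Complex.normSq_apply, hre, him]; ring
  have hn2 : Complex.normSq (1 - (1 + x) ^ 2)
      = (c ^ 2 + b ^ 2) ^ 2 - 2 * c ^ 2 + 2 * b ^ 2 + 1 := by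
    rw [Complex.normSq_apply]
    simp only [Complex.sub_re, Complex.sub_im, Complex.one_re, Complex.one_im,
      pow_two, Complex.mul_re, Complex.mul_im, hre, him]
    ring
  have key : (c ^ 2 + b ^ 2) ^ n = (c ^ 2 + b ^ 2) ^ 2 - 2 * c ^ 2 + 2 * b ^ 2 + 1 := by
    rw [← hn1, habs, hn2, hn1]
  rcases eq_or_lt_of_le hn with h2 | h3
  · -- n = 2
    subst h2
    have him2 := congrArg Complex.im hw
    have hb0 : b = 0 := by
      simp only [Complex.sub_im, Complex.one_im, pow_two, Complex.mul_im, hre, him] at him2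
      have := mul_pos (by linarith : (0:ℝ) < c) (by linarith : (0:ℝ) < c)
      nlinarith [him2]
    rw [hb0] at key
    nlinarith [key]
  · -- n ≥ 3
    have ht1 : 1 < c ^ 2 + b ^ 2 := by nlinarith [sq_nonneg b]
    have h3' : 3 ≤ n := h3
    have hpow : (c ^ 2 + b ^ 2) ^ 3 ≤ (c ^ 2 + b ^ 2) ^ n :=
      pow_le_pow_right₀ (le_of_lt ht1) h3'
    nlinarith [key, hpow, sq_nonneg (4 * (c ^ 2 + b ^ 2) - 5), sq_nonneg b,
      sq_nonneg (c ^ 2 + b ^ 2 - 1)]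
end

section
/- For every n ≥ 5, every complex root z of z^n + z^3 - 1 satisfies Re(z) < 1. -/
lemma roots_Phi_K3n_aux (s c x y : ℝ) (hx : 1 ≤ x) (hs : s = x ^ 2 + y ^ 2)
    (hc : c = x ^ 3 - 3 * x * y ^ 2) (key : s ^ 5 ≤ 1 - 2 * c + s ^ 3) : False := by
  have hs1 : (1:ℝ) ≤ s := by nlinarith [sq_nonneg y]
  have hc2 : c ^ 2 ≤ s ^ 3 := by
    rw [hc, hs]
    nlinarith [sq_nonneg (3 * x ^ 2 * y - y ^ 3)]
  have hs4 : s ≤ 2 := by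
    by_contra hs2
    push_neg at hs2
    have hs0 : (0:ℝ) < s := by linarith
    have h24 : 4 * s ^ 3 ≤ s ^ 5 := by
      nlinarith [mul_nonneg (pow_nonneg hs0.le 3) (by nlinarith : (0:ℝ) ≤ s ^ 2 - 4)]
    have ha : 3 * s ^ 3 - 1 ≤ -2 * c := by linarith
    have ha2 : (3 * s ^ 3 - 1) ^ 2 ≤ 4 * c ^ 2 := by
      nlinarith [mul_nonneg (by linarith : (0:ℝ) ≤ -2 * c - (3 * s ^ 3 - 1))
        (by nlinarith [pow_pos hs0 3] : (0:ℝ) ≤ -2 * c + (3 * s ^ 3 - 1))]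
    have h8 : (8:ℝ) < s ^ 3 := by nlinarith
    nlinarith [ha2, hc2, mul_pos (by linarith : (0:ℝ) < s ^ 3 - 8) (pow_pos hs0 3)]
  have hcl : 4 - 3 * s ≤ c := by
    have hc' : c = 4 * x ^ 3 - 3 * s * x := by rw [hc, hs]; ring
    rw [hc']
    nlinarith [mul_nonneg (sub_nonneg.mpr hx)
      (by nlinarith : (0:ℝ) ≤ 4 * (x ^ 2 + x + 1) - 3 * s)]
  have final : s ^ 5 ≤ s ^ 3 + 6 * s - 7 := by linarith
  nlinarith [sq_nonneg (7 * s - 9), pow_nonneg (sub_nonneg.2 hs1) 3,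
    pow_nonneg (sub_nonneg.2 hs1) 4, pow_nonneg (sub_nonneg.2 hs1) 5]

theorem roots_Phi_K3n (n : ℕ) (hn : 5 ≤ n) (z : ℂ)
    (hz : z ^ n + z ^ 3 - 1 = 0) : z.re < 1 := by
  by_contra hcon
  push_neg at hcon
  have hzn : z ^ n = 1 - z ^ 3 := by linear_combination hz
  have h1 : Complex.normSq (z ^ n) = Complex.normSq (1 - z ^ 3) := by rw [hzn]
  have e1 : Complex.normSq (z ^ n) = (z.re ^ 2 + z.im ^ 2) ^ n := by
    rw [map_pow]
    congr 1
    rw [Complex.normSq_apply]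
    ring
  have e2 : Complex.normSq (1 - z ^ 3)
      = 1 - 2 * (z.re ^ 3 - 3 * z.re * z.im ^ 2) + (z.re ^ 2 + z.im ^ 2) ^ 3 := by
    rw [Complex.normSq_apply]
    simp only [Complex.sub_re, Complex.sub_im, Complex.one_re, Complex.one_im,
      pow_succ, pow_zero, one_mul, Complex.mul_re, Complex.mul_im]
    ring
  rw [e1, e2] at h1
  have hs1 : (1:ℝ) ≤ z.re ^ 2 + z.im ^ 2 := by nlinarith [sq_nonneg z.im]
  have h5 : (z.re ^ 2 + z.im ^ 2) ^ 5 ≤ (z.re ^ 2 + z.im ^ 2) ^ n :=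
    pow_le_pow_right₀ hs1 hn
  exact roots_Phi_K3n_aux (z.re ^ 2 + z.im ^ 2) (z.re ^ 3 - 3 * z.re * z.im ^ 2)
    z.re z.im hcon rfl rfl (h1 ▸ h5)
end

section
/- The complete bipartite graph K_{3,n} is stable for all n ≥ 3: every complex root x of (1+x)^n + (1+x)^3 - 1 has Re(x) ≤ 0. -/
private lemma pow3_re' (w : ℂ) : (w^3).re = w.re^3 - 3*w.re*w.im^2 := by
  simp [pow_succ, Complex.mul_re, Complex.mul_im]; ring
private lemma pow3_im' (w : ℂ) : (w^3).im = 3*w.re^2*w.im - w.im^3 := by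
  simp [pow_succ, Complex.mul_re, Complex.mul_im]; ring
private lemma pow4_re' (w : ℂ) : (w^4).re = w.re^4 - 6*w.re^2*w.im^2 + w.im^4 := by
  simp [pow_succ, Complex.mul_re, Complex.mul_im]; ring
private lemma pow4_im' (w : ℂ) : (w^4).im = 4*w.re^3*w.im - 4*w.re*w.im^3 := by
  simp [pow_succ, Complex.mul_re, Complex.mul_im]; ring
private lemma pow5_re' (w : ℂ) : (w^5).re = w.re^5 - 10*w.re^3*w.im^2 + 5*w.re*w.im^4 := by
  simp [pow_succ, Complex.mul_re, Complex.mul_im]; ring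
private lemma pow5_im' (w : ℂ) : (w^5).im = 5*w.re^4*w.im - 10*w.re^2*w.im^3 + w.im^5 := by
  simp [pow_succ, Complex.mul_re, Complex.mul_im]; ring


set_option maxHeartbeats 3200000 in
private lemma case4 (a b R p : ℝ) (ha : 1 < a) (hRab : R = a^2 + b^2)
    (hpab : p = a^3 - 3*a*b^2) (hp2 : p^2 ≤ R^3) (hE : R^4 = 1 - 2*p + R^3)
    (him : b * (4*a^3 - 4*a*b^2 + 3*a^2 - b^2) = 0)
    (hre : a^4 - 6*a^2*b^2 + b^4 + (a^3 - 3*a*b^2) - 1 = 0) : False := by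
  have ha0 : (0:ℝ) < a := by linarith
  have hR1 : 1 < R := by nlinarith [sq_nonneg b]
  have hp12 : p < 1/2 := by
    have := pow_lt_pow_right₀ hR1 (by norm_num : (3:ℕ) < 4); linarith
  have hb2 : 1/6 < b^2 := by nlinarith [hp12, ha, sq_nonneg b]
  have hb0 : b ≠ 0 := by intro h; rw [h] at hb2; norm_num at hb2
  have hK4 : 4*a^3 - 4*a*b^2 + 3*a^2 - b^2 = 0 := by
    rcases mul_eq_zero.mp him with h | h
    · exact absurd h hb0
    · exact h
  have hP : 64*a^6 + 96*a^5 + 48*a^4 + 8*a^3 + 16*a^2 + 8*a + 1 = 0 := by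
    linear_combination (-(4*a+1)^2) * hre +
      ((6*a^2+3*a)*(4*a+1) - 2*(4*a^3+3*a^2) + (4*a^3-4*a*b^2+3*a^2-b^2)) * hK4
  nlinarith [hP, ha0, pow_pos ha0 6, pow_pos ha0 5, pow_pos ha0 4, pow_pos ha0 3,
    pow_pos ha0 2]

set_option maxHeartbeats 3200000 in
private lemma case5 (a b R p : ℝ) (ha : 1 < a) (hRab : R = a^2 + b^2)
    (hpab : p = a^3 - 3*a*b^2) (hp2 : p^2 ≤ R^3) (hE : R^5 = 1 - 2*p + R^3)
    (him : b * (5*a^4 - 10*a^2*b^2 + b^4 + 3*a^2 - b^2) = 0)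
    (hre : a^5 - 10*a^3*b^2 + 5*a*b^4 + (a^3 - 3*a*b^2) - 1 = 0) : False := by
  have ha0 : (0:ℝ) < a := by linarith
  have hR1 : 1 < R := by nlinarith [sq_nonneg b]
  have hp12 : p < 1/2 := by
    have := pow_lt_pow_right₀ hR1 (by norm_num : (3:ℕ) < 5); linarith
  have hb2 : 1/6 < b^2 := by nlinarith [hp12, ha, sq_nonneg b]
  have hb0 : b ≠ 0 := by intro h; rw [h] at hb2; norm_num at hb2
  have hK5 : 5*a^4 - 10*a^2*b^2 + b^4 + 3*a^2 - b^2 = 0 := by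
    rcases mul_eq_zero.mp him with h | h
    · exact absurd h hb0
    · exact h
  have hG : 1024*a^10 + 768*a^8 + 192*a^6 + 352*a^5 + 16*a^4 + 32*a^3 + 2*a - 1 = 0 := by
    linear_combination
      (-((40*a^3+2*a)^2 - 5*a*((10*a^2+1)*(40*a^3+2*a) - (40*a^3+2*a)*b^2 - (24*a^5+14*a^3+1)))) * hK5 +
      (-((10*a^2+1)*(40*a^3+2*a) - (40*a^3+2*a)*b^2 - (24*a^5+14*a^3+1))) * hre
  nlinarith [hG, ha, one_le_pow₀ ha.le (n := 10), one_le_pow₀ ha.le (n := 8),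
    one_le_pow₀ ha.le (n := 6), one_le_pow₀ ha.le (n := 5),
    one_le_pow₀ ha.le (n := 4), one_le_pow₀ ha.le (n := 3)]

set_option maxHeartbeats 3200000 in
private lemma case6 (a b R p : ℝ) (ha : 1 < a) (hRab : R = a^2 + b^2)
    (hpab : p = a^3 - 3*a*b^2) (hp2 : p^2 ≤ R^3) (hE : R^6 = 1 - 2*p + R^3) : False := by
  have ha0 : (0:ℝ) < a := by linarith
  have hR1 : 1 < R := by nlinarith [sq_nonneg b]
  have hR0 : (0:ℝ) < R := by linarith
  have hp12 : p < 1/2 := by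
    have := pow_lt_pow_right₀ hR1 (by norm_num : (3:ℕ) < 6); linarith
  have hb2 : 1/6 < b^2 := by nlinarith [hp12, ha, sq_nonneg b]
  have hR76 : 7/6 < R := by nlinarith [hb2, ha]
  have hc76 : 343/216 < R^3 := by nlinarith [hR76, sq_nonneg (R - 7/6), hR0]
  have h2p : 1 + R^3 - R^6 = 2*p := by linarith [hE]
  have h4p : (1 + R^3 - R^6)^2 ≤ 4*R^3 := by rw [h2p]; nlinarith [hp2]
  have hupper : R^6 ≤ 2*R^3 + 2 := by
    nlinarith [h4p, sq_nonneg (R^3 - 1), pow_pos hR0 3, pow_pos hR0 6]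
  have hc274 : R^3 ≤ 137/50 := by nlinarith [hupper, hc76]
  have haR : a^2 ≤ R := by nlinarith [sq_nonneg b]
  have ha6 : a^6 ≤ R^3 := by
    have := pow_le_pow_left₀ (sq_nonneg a) haR 3
    calc a^6 = (a^2)^3 := by ring
    _ ≤ R^3 := this
  have ha119 : a < 119/100 := by
    by_contra hcon; push_neg at hcon
    have := pow_le_pow_left₀ (by norm_num : (0:ℝ) ≤ 119/100) hcon 6
    norm_num at this; linarith
  have hp1 : p ≤ 1/25 := by
    nlinarith [hE, hc76, mul_pos (sub_pos.mpr hc76)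
      (show (0:ℝ) < R^3 + 343/216 - 1 by nlinarith [hc76])]
  have hb32 : b^2 ≥ 8/25 := by nlinarith [hp1, hpab, ha, ha0, sq_nonneg b]
  have hR132 : R ≥ 33/25 := by nlinarith [hRab, ha, hb32]
  have hc23 : R^3 ≥ 35937/15625 := by
    have := pow_le_pow_left₀ (by norm_num : (0:ℝ) ≤ 33/25) hR132 3
    norm_num at this; linarith
  have hpB : p ≤ -99/100 := by
    nlinarith [hE, hc23, mul_nonneg (sub_nonneg.mpr hc23)
      (show (0:ℝ) ≤ R^3 + 35937/15625 - 1 by nlinarith [hc23])]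
  have hb35 : b^2 ≥ 3/5 := by
    nlinarith [hpB, hpab, ha, ha0, ha119, mul_pos ha0 (sub_pos.mpr ha)]
  have hR85 : R ≥ 8/5 := by nlinarith [hRab, ha, hb35]
  have : R^3 ≥ 512/125 := by
    have := pow_le_pow_left₀ (by norm_num : (0:ℝ) ≤ 8/5) hR85 3
    norm_num at this; linarith
  linarith [hc274]

set_option maxHeartbeats 3200000 in
private lemma case7 (a b R p : ℝ) (ha : 1 < a) (hRab : R = a^2 + b^2)
    (hpab : p = a^3 - 3*a*b^2) (hp2 : p^2 ≤ R^3) (hE : R^7 = 1 - 2*p + R^3) : False := by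
  have ha0 : (0:ℝ) < a := by linarith
  have hR1 : 1 < R := by nlinarith [sq_nonneg b]
  have hR0 : (0:ℝ) < R := by linarith
  have hp12 : p < 1/2 := by
    have := pow_lt_pow_right₀ hR1 (by norm_num : (3:ℕ) < 7); linarith
  have hb2 : 1/6 < b^2 := by nlinarith [hp12, ha, sq_nonneg b]
  have hR76 : 7/6 < R := by nlinarith [hb2, ha]
  have hc76 : 343/216 < R^3 := by nlinarith [hR76, sq_nonneg (R - 7/6), hR0]
  have hr4 : 2401/1296 < R^4 := by nlinarith [hR76, sq_nonneg (R - 7/6), hR0, hc76]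
  have h2p : 1 + R^3 - R^7 = 2*p := by linarith [hE]
  have h4p : (1 + R^3 - R^7)^2 ≤ 4*R^3 := by rw [h2p]; nlinarith [hp2]
  have hupper : R^7 ≤ 2*R^3 + 2 := by
    nlinarith [h4p, sq_nonneg (R^3 - 1), pow_pos hR0 3, pow_pos hR0 7]
  have hRle : R ≤ 27/20 := by
    by_contra hcon; push_neg at hcon
    nlinarith [hupper, hcon, pow_pos hR0 3, pow_pos hR0 2, sq_nonneg (R - 27/20),
      mul_pos (mul_pos hR0 hR0) hR0]
  have haR : a^2 ≤ R := by nlinarith [sq_nonneg b]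
  have ha117 : a < 117/100 := by nlinarith [haR, hRle]
  have hp1 : p ≤ -17/100 := by
    nlinarith [hE, hc76, hr4, mul_pos (sub_pos.mpr hc76) (sub_pos.mpr hr4),
      pow_pos hR0 3, pow_pos hR0 4]
  have hb38 : b^2 ≥ 38/100 := by
    nlinarith [hp1, hpab, ha, ha0, ha117, mul_pos ha0 (sub_pos.mpr ha)]
  have hR138 : R ≥ 138/100 := by nlinarith [hRab, ha, hb38]
  linarith [hRle]

set_option maxHeartbeats 3200000 in
private lemma case8 (a b R p : ℝ) (ha : 1 < a) (hRab : R = a^2 + b^2)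
    (hpab : p = a^3 - 3*a*b^2) (hp2 : p^2 ≤ R^3) (hE : R^8 = 1 - 2*p + R^3) : False := by
  have ha0 : (0:ℝ) < a := by linarith
  have hR1 : 1 < R := by nlinarith [sq_nonneg b]
  have hR0 : (0:ℝ) < R := by linarith
  have hp12 : p < 1/2 := by
    have := pow_lt_pow_right₀ hR1 (by norm_num : (3:ℕ) < 8); linarith
  have hb2 : 1/6 < b^2 := by nlinarith [hp12, ha, sq_nonneg b]
  have hR76 : 7/6 < R := by nlinarith [hb2, ha]
  have hc76 : 343/216 < R^3 := by nlinarith [hR76, sq_nonneg (R - 7/6), hR0]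
  have hr5 : 16807/7776 < R^5 := by
    have := pow_lt_pow_left₀ hR76 (by norm_num : (0:ℝ) ≤ 7/6) (by norm_num : (5:ℕ) ≠ 0)
    norm_num at this; linarith
  have h2p : 1 + R^3 - R^8 = 2*p := by linarith [hE]
  have h4p : (1 + R^3 - R^8)^2 ≤ 4*R^3 := by rw [h2p]; nlinarith [hp2]
  have hupper : R^8 ≤ 2*R^3 + 2 := by
    nlinarith [h4p, sq_nonneg (R^3 - 1), pow_pos hR0 3, pow_pos hR0 8]
  have hRle : R ≤ 13/10 := by
    by_contra hcon; push_neg at hcon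
    have h3 := pow_lt_pow_left₀ hcon (by norm_num : (0:ℝ) ≤ 13/10) (by norm_num : (3:ℕ) ≠ 0)
    have h5 := pow_lt_pow_left₀ hcon (by norm_num : (0:ℝ) ≤ 13/10) (by norm_num : (5:ℕ) ≠ 0)
    norm_num at h3 h5
    nlinarith [hupper, h3, h5, pow_pos hR0 3]
  have haR : a^2 ≤ R := by nlinarith [sq_nonneg b]
  have ha115 : a < 115/100 := by nlinarith [haR, hRle]
  have hp1 : p ≤ -42/100 := by
    nlinarith [hE, hc76, hr5, mul_pos (sub_pos.mpr hc76) (sub_pos.mpr hr5),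
      pow_pos hR0 3, pow_pos hR0 5]
  have hb45 : b^2 ≥ 45/100 := by
    nlinarith [hp1, hpab, ha, ha0, ha115, mul_pos ha0 (sub_pos.mpr ha)]
  have hR145 : R ≥ 145/100 := by nlinarith [hRab, ha, hb45]
  linarith [hRle]

set_option maxHeartbeats 3200000 in
private lemma case9 (n : ℕ) (h9 : 9 ≤ n) (a b R p : ℝ) (ha : 1 < a)
    (hRab : R = a^2 + b^2) (hpab : p = a^3 - 3*a*b^2) (hp2 : p^2 ≤ R^3)
    (hE : R^n = 1 - 2*p + R^3) : False := by
  have ha0 : (0:ℝ) < a := by linarith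
  have hR1 : 1 < R := by nlinarith [sq_nonneg b]
  have hR0 : (0:ℝ) < R := by linarith
  have hRn9 : R^9 ≤ R^n := pow_le_pow_right₀ hR1.le (by omega)
  have hR91 : 1 < R^9 := one_lt_pow₀ hR1 (by norm_num)
  have hc91 : R^3 < R^9 := pow_lt_pow_right₀ hR1 (by norm_num)
  have hp12 : p < 1/2 := by nlinarith [hE, hRn9, hc91]
  have hb2 : 1/6 < b^2 := by nlinarith [hp12, ha, sq_nonneg b]
  have hR76 : 7/6 < R := by nlinarith [hb2, ha]
  have hc76 : 343/216 < R^3 := by nlinarith [hR76, sq_nonneg (R - 7/6), hR0]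
  have h2p : 1 + R^3 - R^n = 2*p := by linarith [hE]
  have h4p : (1 + R^3 - R^n)^2 ≤ 4*R^3 := by rw [h2p]; nlinarith [hp2]
  have hupper : R^n ≤ 2*R^3 + 2 := by
    nlinarith [h4p, sq_nonneg (R^3 - 1), pow_pos hR0 3, pow_pos hR0 n]
  have hR9u : R^9 ≤ 2*R^3 + 2 := le_trans hRn9 hupper
  have hc1 : R^3 ≤ 9/5 := by
    by_contra hcon; push_neg at hcon
    nlinarith [hR9u, hcon, pow_pos hR0 3, sq_nonneg (R^3 - 9/5), sq_nonneg (R^3 + 9/5)]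
  have haR : a^2 ≤ R := by nlinarith [sq_nonneg b]
  have ha6 : a^6 ≤ R^3 := by
    have := pow_le_pow_left₀ (sq_nonneg a) haR 3
    calc a^6 = (a^2)^3 := by ring
    _ ≤ R^3 := this
  have ha98 : a < 9/8 := by
    by_contra hcon; push_neg at hcon
    have := pow_le_pow_left₀ (by norm_num : (0:ℝ) ≤ 9/8) hcon 6
    norm_num at this; linarith
  have hple : p ≤ -7/10 := by
    nlinarith [hE, hRn9, hc76, mul_pos (sub_pos.mpr hc76)
      (show (0:ℝ) < R^3 + 343/216 - 1 by nlinarith [hc76]),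
      mul_pos (mul_pos hR0 hR0) hR0]
  have hb12 : b^2 ≥ 1/2 := by
    nlinarith [hple, hpab, ha, ha0, ha98, mul_pos ha0 (sub_pos.mpr ha)]
  have hR32 : R ≥ 3/2 := by nlinarith [hRab, ha, hb12]
  have : R^3 ≥ 27/8 := by
    have := pow_le_pow_left₀ (by norm_num : (0:ℝ) ≤ 3/2) hR32 3
    norm_num at this; linarith
  linarith [hc1]

set_option maxHeartbeats 3200000 in
theorem K3n_stable (n : ℕ) (hn : 3 ≤ n) (x : ℂ)
    (hx : (1 + x) ^ n + (1 + x) ^ 3 - 1 = 0) : x.re ≤ 0 := by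
  by_contra hc
  push_neg at hc
  set z : ℂ := 1 + x with hzdef
  have hz : z ^ n + z ^ 3 = 1 := by linear_combination hx
  set a : ℝ := z.re with hadef
  set b : ℝ := z.im with hbdef
  have ha : 1 < a := by
    have : a = 1 + x.re := by rw [hadef, hzdef]; simp
    linarith
  have ha0 : (0:ℝ) < a := by linarith
  set R : ℝ := Complex.normSq z with hRdef
  have hRab : R = a^2 + b^2 := by rw [hRdef, Complex.normSq_apply]; ring
  have hR1 : 1 < R := by nlinarith [sq_nonneg b]
  have hR0 : (0:ℝ) < R := by linarith
  set p : ℝ := (z^3).re with hpdef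
  have hpab : p = a^3 - 3*a*b^2 := by
    rw [hpdef, pow3_re', ← hadef, ← hbdef]
  have hR3 : Complex.normSq (z^3) = R^3 := by rw [map_pow]
  have hp2 : p^2 ≤ R^3 := by
    rw [← hR3, Complex.normSq_apply, ← hpdef]
    nlinarith [sq_nonneg ((z^3).im)]
  have hE : R^n = 1 - 2*p + R^3 := by
    have h1 : Complex.normSq (z^n) = Complex.normSq (1 - z^3) := by
      rw [show z^n = 1 - z^3 from by linear_combination hz]
    rw [map_pow] at h1
    rw [h1, Complex.normSq_apply, Complex.sub_re, Complex.sub_im, Complex.one_re,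
      Complex.one_im, ← hpdef]
    have h2 : ((z^3).re)^2 + ((z^3).im)^2 = R^3 := by
      rw [← hR3, Complex.normSq_apply]; ring
    nlinarith [h2]
  rcases lt_or_ge n 9 with h9 | h9
  · interval_cases n
    · -- n = 3
      have h13 : z^3 = 1/2 := by linear_combination (1/2 : ℂ) * hz
      have h14 := congrArg Complex.normSq h13
      rw [hR3] at h14
      have : Complex.normSq (1/2 : ℂ) = 1/4 := by
        simp [Complex.normSq_apply]; norm_num
      rw [this] at h14
      have h15 : 1 < R^3 := one_lt_pow₀ hR1 (by norm_num)
      linarith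
    · -- n = 4
      refine case4 a b R p ha hRab hpab hp2 hE ?_ ?_
      · have h := congrArg Complex.im hz
        simp only [Complex.add_im, Complex.one_im, pow4_im', pow3_im'] at h
        rw [← hadef, ← hbdef] at h
        linear_combination h
      · have h := congrArg Complex.re hz
        simp only [Complex.add_re, Complex.one_re, pow4_re', pow3_re'] at h
        rw [← hadef, ← hbdef] at h
        linear_combination h
    · -- n = 5
      refine case5 a b R p ha hRab hpab hp2 hE ?_ ?_
      · have h := congrArg Complex.im hz
        simp only [Complex.add_im, Complex.one_im, pow5_im', pow3_im'] at h
        rw [← hadef, ← hbdef] at h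
        linear_combination h
      · have h := congrArg Complex.re hz
        simp only [Complex.add_re, Complex.one_re, pow5_re', pow3_re'] at h
        rw [← hadef, ← hbdef] at h
        linear_combination h
    · exact case6 a b R p ha hRab hpab hp2 hE
    · exact case7 a b R p ha hRab hpab hp2 hE
    · exact case8 a b R p ha hRab hpab hp2 hE
  · exact case9 n h9 a b R p ha hRab hpab hp2 hE
end

section
/- For every real k with -2 ≤ k ≤ 2 and every n ≥ 4, (k^2+1)^{n/2} > |k| · (k^2+4)^{1/2}. -/
theorem edge_inequality (k : ℝ) (hk1 : -2 ≤ k) (hk2 : k ≤ 2)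
    (n : ℕ) (hn : 4 ≤ n) :
    |k| * Real.sqrt (k ^ 2 + 4) < (k ^ 2 + 1) ^ ((n : ℝ) / 2) := by
  have hb : (1:ℝ) ≤ k ^ 2 + 1 := by nlinarith [sq_nonneg k]
  have hstep : ((k ^ 2 + 1) : ℝ) ^ (2:ℝ) ≤ (k ^ 2 + 1) ^ ((n : ℝ) / 2) := by
    apply Real.rpow_le_rpow_of_exponent_le hb
    have : (4:ℝ) ≤ (n:ℝ) := by exact_mod_cast hn
    linarith
  have h2 : ((k ^ 2 + 1) : ℝ) ^ (2:ℝ) = (k ^ 2 + 1) ^ 2 := by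
    rw [Real.rpow_two]
  have hlt : |k| * Real.sqrt (k ^ 2 + 4) < (k ^ 2 + 1) ^ 2 := by
    have h1 : |k| * Real.sqrt (k ^ 2 + 4) = Real.sqrt (k ^ 2 * (k ^ 2 + 4)) := by
      rw [Real.sqrt_mul (sq_nonneg k), Real.sqrt_sq_eq_abs]
    have h3 : ((k ^ 2 + 1) ^ 2 : ℝ) = Real.sqrt (((k ^ 2 + 1) ^ 2) ^ 2) := by
      rw [Real.sqrt_sq (by positivity)]
    rw [h1, h3]
    apply Real.sqrt_lt_sqrt (by positivity)
    nlinarith [sq_nonneg k, sq_nonneg (k^2)]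
  calc |k| * Real.sqrt (k ^ 2 + 4) < (k ^ 2 + 1) ^ 2 := hlt
    _ = (k ^ 2 + 1) ^ (2:ℝ) := h2.symm
    _ ≤ _ := hstep
end

section
/- For every real k with -2 ≤ k ≤ 2, k^2 · (1 + k^4 + 5k^2 + 4 + 2√(k^2+1)·√(k^2+4)) < (1 + k^2)^5. -/
theorem key_inequality_K3n (k : ℝ) (hk1 : -2 ≤ k) (hk2 : k ≤ 2) :
    k ^ 2 * (1 + k ^ 4 + 5 * k ^ 2 + 4 +
      2 * Real.sqrt (k ^ 2 + 1) * Real.sqrt (k ^ 2 + 4)) < (1 + k ^ 2) ^ 5 := by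
  set a := Real.sqrt (k ^ 2 + 1) with ha
  set b := Real.sqrt (k ^ 2 + 4) with hb
  have ha2 : a ^ 2 = k ^ 2 + 1 := Real.sq_sqrt (by positivity)
  have hb2 : b ^ 2 = k ^ 2 + 4 := Real.sq_sqrt (by positivity)
  have hab : 2 * a * b ≤ 2 * k ^ 2 + 5 := by nlinarith [sq_nonneg (a - b)]
  nlinarith [sq_nonneg k, sq_nonneg (k ^ 2 - 1), sq_nonneg (k * (k ^ 2 - 1)),
    sq_nonneg (k ^ 2 * (k ^ 2 - 1)), sq_nonneg (3 * k ^ 2 - 1), sq_nonneg (k * (3 * k ^ 2 - 1)),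
    sq_nonneg (k ^ 2), sq_nonneg (k ^ 3)]
end

section
/- For every integer k with 2 ≤ k ≤ 6 and every m ≥ 1, every complex root z of z^{m+k} + z^m - 1 satisfies Re(z) < 1; consequently the complete bipartite graph K_{m,m+k} is stable. -/
set_option maxRecDepth 100000

lemma aux2 (a t : ℝ) (ha : 1 ≤ a) (ht : 0 ≤ t) :
    1 < (a^2 + t) * ((a^2 + t)^2 + 2*(a^2 - t) + 1) := by
  obtain ⟨p, hp, rfl⟩ : ∃ p, 0 ≤ p ∧ a = 1 + p := ⟨a - 1, by linarith, by ring⟩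
  linarith [pow_nonneg ht 1, pow_nonneg ht 2, pow_nonneg ht 3, pow_nonneg hp 1, mul_nonneg (pow_nonneg hp 1) (pow_nonneg ht 1), mul_nonneg (pow_nonneg hp 1) (pow_nonneg ht 2), pow_nonneg hp 2, mul_nonneg (pow_nonneg hp 2) (pow_nonneg ht 1), mul_nonneg (pow_nonneg hp 2) (pow_nonneg ht 2), pow_nonneg hp 3, mul_nonneg (pow_nonneg hp 3) (pow_nonneg ht 1), pow_nonneg hp 4, mul_nonneg (pow_nonneg hp 4) (pow_nonneg ht 1), pow_nonneg hp 5, pow_nonneg hp 6]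

lemma aux3 (a t : ℝ) (ha : 1 ≤ a) (ht : 0 ≤ t) :
    1 < (a^2 + t) * ((a^2 + t)^3 + 2*(a^3 - 3*a*t) + 1) := by
  obtain ⟨p, hp, rfl⟩ : ∃ p, 0 ≤ p ∧ a = 1 + p := ⟨a - 1, by linarith, by ring⟩
  linarith [pow_nonneg ht 1, pow_nonneg ht 3, pow_nonneg ht 4, pow_nonneg hp 1, mul_nonneg (pow_nonneg hp 1) (pow_nonneg ht 1), mul_nonneg (pow_nonneg hp 1) (pow_nonneg ht 2), mul_nonneg (pow_nonneg hp 1) (pow_nonneg ht 3), pow_nonneg hp 2, mul_nonneg (pow_nonneg hp 2) (pow_nonneg ht 1), mul_nonneg (pow_nonneg hp 2) (pow_nonneg ht 2), mul_nonneg (pow_nonneg hp 2) (pow_nonneg ht 3), pow_nonneg hp 3, mul_nonneg (pow_nonneg hp 3) (pow_nonneg ht 1), mul_nonneg (pow_nonneg hp 3) (pow_nonneg ht 2), pow_nonneg hp 4, mul_nonneg (pow_nonneg hp 4) (pow_nonneg ht 1), mul_nonneg (pow_nonneg hp 4) (pow_nonneg ht 2), pow_nonneg hp 5, mul_nonneg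 (pow_nonneg hp 5) (pow_nonneg ht 1), pow_nonneg hp 6, mul_nonneg (pow_nonneg hp 6) (pow_nonneg ht 1), pow_nonneg hp 7, pow_nonneg hp 8]

lemma aux4 (a t : ℝ) (ha : 1 ≤ a) (ht : 0 ≤ t) :
    1 < (a^2 + t) * ((a^2 + t)^4 + 2*(a^4 - 6*a^2*t + t^2) + 1) := by
  obtain ⟨p, hp, rfl⟩ : ∃ p, 0 ≤ p ∧ a = 1 + p := ⟨a - 1, by linarith, by ring⟩
  have hA : (0:ℝ) < 3 - 4*t + 12*t^3 := by nlinarith [mul_nonneg ht (sq_nonneg (t - 1/3)), sq_nonneg (t - 1/3)]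
  linarith [hA, pow_nonneg ht 4, pow_nonneg ht 5, pow_nonneg hp 1, mul_nonneg (pow_nonneg hp 1) (pow_nonneg ht 2), mul_nonneg (pow_nonneg hp 1) (pow_nonneg ht 3), mul_nonneg (pow_nonneg hp 1) (pow_nonneg ht 4), pow_nonneg hp 2, mul_nonneg (pow_nonneg hp 2) (pow_nonneg ht 1), mul_nonneg (pow_nonneg hp 2) (pow_nonneg ht 2), mul_nonneg (pow_nonneg hp 2) (pow_nonneg ht 3), mul_nonneg (pow_nonneg hp 2) (pow_nonneg ht 4), pow_nonneg hp 3, mul_nonneg (pow_nonneg hp 3) (pow_nonneg ht 1), mul_nonneg (pow_nonneg hp 3) (pow_nonneg ht 2), mul_nonneg (pow_nonneg hp 3) (pow_nonneg ht 3), pow_nonneg hp 4, mul_nonneg (pow_nonneg hp 4) (pow_nonneg ht 1), mul_nonneg (pow_nonneg hp 4) (pow_nonneg ht 2), mul_nonneg (pow_nonneg hp 4) (pow_nonneg ht 3), pow_nonneg hp 5, mul_nonneg (pow_nonneg hp 5) (pow_nonneg ht 1), mul_nonneg (pow_nonneg hp 5) (pow_nonneg ht 2), pow_nonneg hp 6,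 mul_nonneg (pow_nonneg hp 6) (pow_nonneg ht 1), mul_nonneg (pow_nonneg hp 6) (pow_nonneg ht 2), pow_nonneg hp 7, mul_nonneg (pow_nonneg hp 7) (pow_nonneg ht 1), pow_nonneg hp 8, mul_nonneg (pow_nonneg hp 8) (pow_nonneg ht 1), pow_nonneg hp 9, pow_nonneg hp 10]

lemma aux5 (a t : ℝ) (ha : 1 ≤ a) (ht : 0 ≤ t) :
    1 < (a^2 + t) * ((a^2 + t)^5 + 2*(a^5 - 10*a^3*t + 5*a*t^2) + 1) := by
  obtain ⟨p, hp, rfl⟩ : ∃ p, 0 ≤ p ∧ a = 1 + p := ⟨a - 1, by linarith, by ring⟩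
  have hA : (0:ℝ) < 3 - 11*t + 5*t^2 + 30*t^3 := by nlinarith [mul_nonneg ht (sq_nonneg (t - 1/3)), sq_nonneg (t - 43/150)]
  have hB : (0:ℝ) ≤ 28 - 30*t + 90*t^2 := by nlinarith [sq_nonneg (t - 1/6)]
  have hB' : (0:ℝ) ≤ p * (28 - 30*t + 90*t^2) := mul_nonneg hp hB
  linarith [hA, hB', pow_nonneg ht 4, pow_nonneg ht 5, pow_nonneg ht 6, mul_nonneg (pow_nonneg hp 1) (pow_nonneg ht 3), mul_nonneg (pow_nonneg hp 1) (pow_nonneg ht 4), mul_nonneg (pow_nonneg hp 1) (pow_nonneg ht 5), pow_nonneg hp 2, mul_nonneg (pow_nonneg hp 2) (pow_nonneg ht 1), mul_nonneg (pow_nonneg hp 2) (pow_nonneg ht 2), mul_nonneg (pow_nonneg hp 2) (pow_nonneg ht 3), mul_nonneg (pow_nonneg hp 2) (pow_nonneg ht 4), mul_nonneg (pow_nonneg hp 2) (pow_nonneg ht 5), pow_nonneg hp 3, mul_nonneg (pow_nonneg hp 3) (pow_nonneg ht 1), mul_nonneg (pow_nonneg hp 3) (pow_nonneg ht 2), mul_nonneg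 (pow_nonneg hp 3) (pow_nonneg ht 3), mul_nonneg (pow_nonneg hp 3) (pow_nonneg ht 4), pow_nonneg hp 4, mul_nonneg (pow_nonneg hp 4) (pow_nonneg ht 1), mul_nonneg (pow_nonneg hp 4) (pow_nonneg ht 2), mul_nonneg (pow_nonneg hp 4) (pow_nonneg ht 3), mul_nonneg (pow_nonneg hp 4) (pow_nonneg ht 4), pow_nonneg hp 5, mul_nonneg (pow_nonneg hp 5) (pow_nonneg ht 1), mul_nonneg (pow_nonneg hp 5) (pow_nonneg ht 2), mul_nonneg (pow_nonneg hp 5) (pow_nonneg ht 3), pow_nonneg hp 6, mul_nonneg (pow_nonneg hp 6) (pow_nonneg ht 1), mul_nonneg (pow_nonneg hp 6) (pow_nonneg ht 2), mul_nonneg (pow_nonneg hp 6) (pow_nonneg ht 3), pow_nonneg hp 7, mul_nonneg (pow_nonneg hp 7) (pow_nonneg ht 1), mul_nonneg (pow_nonneg hp 7) (pow_nonneg ht 2), pow_nonneg hp 8, mul_nonneg (pow_nonneg hp 8) (pow_nonneg ht 1), mul_nonneg (pow_nonneg hp 8) (pow_nonneg ht 2), pow_nonneg hp 9, mul_nonneg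 (pow_nonneg hp 9) (pow_nonneg ht 1), pow_nonneg hp 10, mul_nonneg (pow_nonneg hp 10) (pow_nonneg ht 1), pow_nonneg hp 11, pow_nonneg hp 12]

lemma aux6 (a t : ℝ) (ha : 1 ≤ a) (ht : 0 ≤ t) :
    1 < (a^2 + t) * ((a^2 + t)^6 + 2*(a^6 - 15*a^4*t + 15*a^2*t^2 - t^3) + 1) := by
  obtain ⟨p, hp, rfl⟩ : ∃ p, 0 ≤ p ∧ a = 1 + p := ⟨a - 1, by linarith, by ring⟩
  have hA : (0:ℝ) < 3 - 20*t + 21*t^2 + 63*t^3 := by nlinarith [mul_nonneg ht (sq_nonneg (t - 1/5)), sq_nonneg (t - 1/4)]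
  have hB : (0:ℝ) ≤ 32 - 84*t + 210*t^2 := by nlinarith [sq_nonneg (t - 1/5)]
  have hB' : (0:ℝ) ≤ p * (32 - 84*t + 210*t^2) := mul_nonneg hp hB
  linarith [hA, hB', pow_nonneg ht 4, pow_nonneg ht 5, pow_nonneg ht 6, pow_nonneg ht 7, mul_nonneg (pow_nonneg hp 1) (pow_nonneg ht 3), mul_nonneg (pow_nonneg hp 1) (pow_nonneg ht 4), mul_nonneg (pow_nonneg hp 1) (pow_nonneg ht 5), mul_nonneg (pow_nonneg hp 1) (pow_nonneg ht 6), pow_nonneg hp 2, mul_nonneg (pow_nonneg hp 2) (pow_nonneg ht 1), mul_nonneg (pow_nonneg hp 2) (pow_nonneg ht 2), mul_nonneg (pow_nonneg hp 2) (pow_nonneg ht 3), mul_nonneg (pow_nonneg hp 2) (pow_nonneg ht 4), mul_nonneg (pow_nonneg hp 2) (pow_nonneg ht 5), mul_nonneg (pow_nonneg hp 2) (pow_nonneg ht 6), pow_nonneg hp 3, mul_nonneg (pow_nonneg hp 3) (pow_nonneg ht 1), mul_nonneg (pow_nonneg hp 3) (pow_nonneg ht 2), mul_nonneg (pow_nonneg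 hp 3) (pow_nonneg ht 3), mul_nonneg (pow_nonneg hp 3) (pow_nonneg ht 4), mul_nonneg (pow_nonneg hp 3) (pow_nonneg ht 5), pow_nonneg hp 4, mul_nonneg (pow_nonneg hp 4) (pow_nonneg ht 1), mul_nonneg (pow_nonneg hp 4) (pow_nonneg ht 2), mul_nonneg (pow_nonneg hp 4) (pow_nonneg ht 3), mul_nonneg (pow_nonneg hp 4) (pow_nonneg ht 4), mul_nonneg (pow_nonneg hp 4) (pow_nonneg ht 5), pow_nonneg hp 5, mul_nonneg (pow_nonneg hp 5) (pow_nonneg ht 1), mul_nonneg (pow_nonneg hp 5) (pow_nonneg ht 2), mul_nonneg (pow_nonneg hp 5) (pow_nonneg ht 3), mul_nonneg (pow_nonneg hp 5) (pow_nonneg ht 4), pow_nonneg hp 6, mul_nonneg (pow_nonneg hp 6) (pow_nonneg ht 1), mul_nonneg (pow_nonneg hp 6) (pow_nonneg ht 2), mul_nonneg (pow_nonneg hp 6) (pow_nonneg ht 3), mul_nonneg (pow_nonneg hp 6) (pow_nonneg ht 4), pow_nonneg hp 7, mul_nonneg (pow_nonneg hp 7) (pow_nonneg ht 1), mul_nonneg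 (pow_nonneg hp 7) (pow_nonneg ht 2), mul_nonneg (pow_nonneg hp 7) (pow_nonneg ht 3), pow_nonneg hp 8, mul_nonneg (pow_nonneg hp 8) (pow_nonneg ht 1), mul_nonneg (pow_nonneg hp 8) (pow_nonneg ht 2), mul_nonneg (pow_nonneg hp 8) (pow_nonneg ht 3), pow_nonneg hp 9, mul_nonneg (pow_nonneg hp 9) (pow_nonneg ht 1), mul_nonneg (pow_nonneg hp 9) (pow_nonneg ht 2), pow_nonneg hp 10, mul_nonneg (pow_nonneg hp 10) (pow_nonneg ht 1), mul_nonneg (pow_nonneg hp 10) (pow_nonneg ht 2), pow_nonneg hp 11, mul_nonneg (pow_nonneg hp 11) (pow_nonneg ht 1), pow_nonneg hp 12, mul_nonneg (pow_nonneg hp 12) (pow_nonneg ht 1), pow_nonneg hp 13, pow_nonneg hp 14]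

theorem Kmmk_stable_small_k (k : ℕ) (hk2 : 2 ≤ k) (hk6 : k ≤ 6)
    (m : ℕ) (hm : 1 ≤ m) :
    (∀ z : ℂ, z ^ (m + k) + z ^ m - 1 = 0 → z.re < 1) ∧
    (∀ x : ℂ, (1 + x) ^ (m + k) + (1 + x) ^ m - 1 = 0 → x.re ≤ 0) := by
  have hmain : ∀ z : ℂ, z ^ (m + k) + z ^ m - 1 = 0 → z.re < 1 := by
    intro z hz
    by_contra hre
    push_neg at hre
    -- `hre : 1 ≤ z.re`
    have h1 : z ^ m * (z ^ k + 1) = 1 := by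
      rw [mul_add, mul_one, ← pow_add]
      linear_combination hz
    have h2 : (Complex.normSq z) ^ m * Complex.normSq (z ^ k + 1) = 1 := by
      rw [← map_pow, ← map_mul, h1, map_one]
    have hs : 1 ≤ Complex.normSq z := by
      rw [Complex.normSq_apply]
      nlinarith [sq_nonneg z.im, hre]
    have hsm : Complex.normSq z ≤ (Complex.normSq z) ^ m :=
      le_self_pow₀ (by linarith) (by omega)
    have hN : 0 ≤ Complex.normSq (z ^ k + 1) := Complex.normSq_nonneg _
    have key : Complex.normSq z * Complex.normSq (z ^ k + 1) ≤ 1 := by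
      calc Complex.normSq z * Complex.normSq (z ^ k + 1)
          ≤ (Complex.normSq z) ^ m * Complex.normSq (z ^ k + 1) :=
            mul_le_mul_of_nonneg_right hsm hN
        _ = 1 := h2
    have h3 : Complex.normSq (z ^ k + 1)
        = (Complex.normSq z) ^ k + 2 * (z ^ k).re + 1 := by
      rw [Complex.normSq_add, map_pow, Complex.normSq_one]
      simp only [map_one, mul_one]
      ring
    rw [h3, Complex.normSq_apply] at key
    have ht : (0:ℝ) ≤ z.im ^ 2 := sq_nonneg _
    interval_cases k
    · have hk : (z ^ 2).re = z.re ^ 2 - z.im ^ 2 := by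
        simp [pow_succ, Complex.mul_re, Complex.mul_im]; try ring
      rw [hk] at key
      have := aux2 z.re (z.im ^ 2) hre ht
      nlinarith [key, this]
    · have hk : (z ^ 3).re = z.re ^ 3 - 3 * z.re * z.im ^ 2 := by
        simp [pow_succ, Complex.mul_re, Complex.mul_im]; try ring
      rw [hk] at key
      have := aux3 z.re (z.im ^ 2) hre ht
      nlinarith [key, this]
    · have hk : (z ^ 4).re = z.re ^ 4 - 6 * z.re ^ 2 * z.im ^ 2 + z.im ^ 4 := by
        simp [pow_succ, Complex.mul_re, Complex.mul_im]; try ring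
      rw [hk] at key
      have := aux4 z.re (z.im ^ 2) hre ht
      nlinarith [key, this]
    · have hk : (z ^ 5).re = z.re ^ 5 - 10 * z.re ^ 3 * z.im ^ 2 + 5 * z.re * z.im ^ 4 := by
        simp [pow_succ, Complex.mul_re, Complex.mul_im]; try ring
      rw [hk] at key
      have := aux5 z.re (z.im ^ 2) hre ht
      nlinarith [key, this]
    · have hk : (z ^ 6).re = z.re ^ 6 - 15 * z.re ^ 4 * z.im ^ 2 + 15 * z.re ^ 2 * z.im ^ 4 - z.im ^ 6 := by
        simp [pow_succ, Complex.mul_re, Complex.mul_im]; try ring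
      rw [hk] at key
      have := aux6 z.re (z.im ^ 2) hre ht
      nlinarith [key, this]
  refine ⟨hmain, fun x hx => ?_⟩
  have h := hmain (1 + x) (by linear_combination hx)
  rw [Complex.add_re, Complex.one_re] at h
  linarith
end

section
/- For every integer k ≥ 2, there exists N(k) ∈ ℕ such that for all m > N(k), every complex root z of z^{m+k} + z^m - 1 satisfies Re(z) < 1; hence K_{m,m+k} is stable for all m > N(k). -/
/-!
Write a root as `z ^ m * (z ^ k + 1) = 1` and suppose `1 ≤ Re z`. Then
`1 + ‖z - 1‖ ^ 2 ≤ ‖z‖ ^ 2`, so `‖z‖ ≥ 1`. Near `z = 1` the factor `z ^ k + 1` is close to `2`,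
so the product has norm `> 1`. Away from `1`, say `‖z - 1‖ ≥ δ`, we get `‖z‖ ≥ √(1 + δ ^ 2) > 1`,
and with `c = √(1 + δ ^ 2)` the norm `‖z‖ ^ m * ‖z ^ k + 1‖ ≥ c ^ m * (c ^ k - 1)` exceeds `1`
once `m` is large.
-/

open Metric

theorem Complex.one_add_sq_norm_sub_one_le_sq_norm {z : ℂ} (hz : 1 ≤ z.re) :
    1 + ‖z - 1‖ ^ 2 ≤ ‖z‖ ^ 2 := by
  simp only [Complex.sq_norm, Complex.normSq_apply, Complex.sub_re, Complex.sub_im,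
    Complex.one_re, Complex.one_im]
  nlinarith

theorem Complex.exists_pos_forall_norm_sub_one_lt_one_lt_norm_pow_add_one (k : ℕ) :
    ∃ δ > 0, ∀ z : ℂ, ‖z - 1‖ < δ → 1 < ‖z ^ k + 1‖ := by
  have hcont : ContinuousAt (fun z : ℂ => z ^ k + 1) 1 := by fun_prop
  obtain ⟨δ, hδ, hclose⟩ := continuousAt_iff.mp hcont 1 one_pos
  refine ⟨δ, hδ, fun z hz => ?_⟩
  have hdist : ‖z ^ k + 1 - 2‖ < 1 := by
    simpa [dist_eq_norm, one_add_one_eq_two] using hclose (dist_eq_norm z 1 ▸ hz)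
  have htwo : ‖(2 : ℂ)‖ - ‖z ^ k + 1‖ ≤ ‖z ^ k + 1 - 2‖ := by
    simpa only [norm_sub_rev] using norm_sub_norm_le (2 : ℂ) (z ^ k + 1)
  rw [Complex.norm_two] at htwo
  linarith

theorem Complex.exists_forall_one_lt_norm_pow_mul_norm_pow_add_one {c : ℝ} (hc : 1 < c)
    {k : ℕ} (hk : k ≠ 0) :
    ∃ N : ℕ, ∀ m, N < m → ∀ z : ℂ, c ≤ ‖z‖ → 1 < ‖z‖ ^ m * ‖z ^ k + 1‖ := by
  have hck : 0 < c ^ k - 1 := sub_pos.mpr (one_lt_pow₀ hc hk)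
  obtain ⟨N, hN⟩ := pow_unbounded_of_one_lt (1 / (c ^ k - 1)) hc
  refine ⟨N, fun m hm z hz => ?_⟩
  have hfactor : c ^ k - 1 ≤ ‖z ^ k + 1‖ := by
    have := norm_sub_norm_le (z ^ k) (-1)
    rw [norm_neg, norm_one, sub_neg_eq_add, norm_pow] at this
    nlinarith [pow_le_pow_left₀ (by linarith) hz k]
  calc 1 < c ^ N * (c ^ k - 1) := by rwa [div_lt_iff₀ hck] at hN
    _ ≤ c ^ m * (c ^ k - 1) := by gcongr; exact hc.le
    _ ≤ ‖z‖ ^ m * ‖z ^ k + 1‖ := by gcongr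

theorem Complex.exists_forall_re_lt_one_of_pow_add_pow_sub_one_eq_zero {k : ℕ} (hk : k ≠ 0) :
    ∃ N : ℕ, ∀ m, N < m → ∀ z : ℂ, z ^ (m + k) + z ^ m - 1 = 0 → z.re < 1 := by
  obtain ⟨δ, hδ, hnear⟩ := exists_pos_forall_norm_sub_one_lt_one_lt_norm_pow_add_one k
  have hc : 1 < √(1 + δ ^ 2) := by
    rw [Real.lt_sqrt zero_le_one]; nlinarith
  obtain ⟨N, hfar⟩ := exists_forall_one_lt_norm_pow_mul_norm_pow_add_one hc hk
  refine ⟨N, fun m hm z hz => ?_⟩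
  by_contra! hre
  have hroot : ‖z‖ ^ m * ‖z ^ k + 1‖ = 1 := by
    rw [← norm_pow, ← norm_mul, ← norm_one (α := ℂ)]
    congr 1
    linear_combination hz
  have hsq := one_add_sq_norm_sub_one_le_sq_norm hre
  rcases lt_or_ge ‖z - 1‖ δ with hclose | hfar_from_one
  · have hm : 1 ≤ ‖z‖ ^ m := one_le_pow₀ (by nlinarith [norm_nonneg z, norm_nonneg (z - 1)])
    nlinarith [hnear z hclose]
  · have hzc : √(1 + δ ^ 2) ≤ ‖z‖ := by
      rw [Real.sqrt_le_left (norm_nonneg z)]; nlinarith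
    exact (hfar m hm z hzc).ne' hroot

theorem Kmmk_eventually_stable (k : ℕ) (hk : 2 ≤ k) :
    ∃ N : ℕ, ∀ m : ℕ, N < m →
      (∀ z : ℂ, z ^ (m + k) + z ^ m - 1 = 0 → z.re < 1) ∧
      (∀ x : ℂ, (1 + x) ^ (m + k) + (1 + x) ^ m - 1 = 0 → x.re ≤ 0) := by
  obtain ⟨N, hN⟩ :=
    Complex.exists_forall_re_lt_one_of_pow_add_pow_sub_one_eq_zero (by omega : k ≠ 0)
  refine ⟨N, fun m hm => ⟨hN m hm, fun x hx => ?_⟩⟩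
  have h := hN m hm (1 + x) hx
  rw [Complex.add_re, Complex.one_re] at h
  linarith
end

section
/- Let s > 1 and θ ∈ (0, π] be real. Then there exists a positive integer U such that for all integers r > U, s^{1/r} · cos(θ/r) > 1. -/
theorem root_real_part_eventually_large (s θ : ℝ) (hs : 1 < s)
    (hθ1 : 0 < θ) (hθ2 : θ ≤ Real.pi) :
    ∃ U : ℕ, 0 < U ∧ ∀ r : ℕ, U < r →
      1 < s ^ ((1 : ℝ) / r) * Real.cos (θ / r) := by
  set a := Real.log s with ha
  have ha0 : 0 < a := Real.log_pos hs
  set b := θ ^ 2 with hb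
  have hb0 : 0 < b := by positivity
  refine ⟨⌈b + b * (1 + a) / a⌉₊ + 1, Nat.succ_pos _, ?_⟩
  intro r hr
  have hr0 : 0 < r := lt_of_le_of_lt (Nat.zero_le _) hr
  have hrR : (0:ℝ) < r := by exact_mod_cast hr0
  have hr1 : (1:ℝ) ≤ r := by exact_mod_cast hr0
  have hceil : (⌈b + b * (1 + a) / a⌉₊ + 1 : ℝ) ≤ r := by
    exact_mod_cast hr.le
  have hrb : b + b * (1 + a) / a < r := by
    have := Nat.le_ceil (b + b * (1 + a) / a)
    linarith
  have hba : 0 < b * (1 + a) / a := by positivity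
  have hbr : b < r := by linarith
  have har : b * (1 + a) < a * r := by
    have h1 : b * (1 + a) / a < r := by linarith
    calc b * (1 + a) = (b * (1 + a) / a) * a := by field_simp
    _ < r * a := by exact mul_lt_mul_of_pos_right h1 ha0
    _ = a * r := by ring
  have h1 : 1 + a / r ≤ s ^ ((1:ℝ)/r) := by
    rw [Real.rpow_def_of_pos (by linarith), ← ha, mul_one_div]
    have := Real.add_one_le_exp (a / r)
    linarith
  have h2 : 1 - b / (2 * r ^ 2) ≤ Real.cos (θ / r) := by
    have := Real.one_sub_sq_div_two_le_cos (x := θ / r)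
    have he : (θ / r) ^ 2 / 2 = b / (2 * r ^ 2) := by
      rw [hb]; field_simp
    linarith
  have hpos1 : (0:ℝ) < 1 + a / r := by positivity
  have hpos2 : (0:ℝ) < 1 - b / (2 * r ^ 2) := by
    rw [sub_pos, div_lt_one (by positivity)]
    nlinarith
  have key : 1 < (1 + a / r) * (1 - b / (2 * r ^ 2)) := by
    rw [show (1 + a / r) * (1 - b / (2 * r ^ 2))
        = 1 + (a * (2 * r ^ 2) - b * r - a * b) / (2 * r ^ 3) by field_simp; ring]
    have hnum : 0 < a * (2 * r ^ 2) - b * r - a * b := by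
      nlinarith [mul_lt_mul_of_pos_left har hrR, mul_pos hb0 hrR,
        mul_le_mul_of_nonneg_left hr1 (le_of_lt (mul_pos ha0 hb0))]
    have := div_pos hnum (by positivity : (0:ℝ) < 2 * r ^ 3)
    linarith
  calc 1 < (1 + a / r) * (1 - b / (2 * r ^ 2)) := key
    _ ≤ s ^ ((1:ℝ)/r) * Real.cos (θ / r) :=
      mul_le_mul h1 h2 (le_of_lt hpos2) (le_trans (le_of_lt hpos1) h1)
end
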